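/- arXiv:1911.07905 — 5 statements merged into one kernel-verified Lean document; each statement's English description precedes it below -/
import Mathlib

section
/- For all positive integers n and k there exists a de Bruijn cycle of all n-letter words over a k-letter alphabet: there is a function f : ZMod (k^n) → Fin k such that the map sending each i ∈ ZMod (k^n) to the word (j : Fin n) ↦ f(i + j) is a bijection from ZMod (k^n) onto the set of all words Fin n → Fin k. -/
/-!
Call a permutation `σ` of the words of length `n` admissible if every step `e ↦ σ e` is an edge
of the de Bruijn graph (drop the first letter, append a new one). Reading the first letters along
an orbit of `σ` gives a cyclic sequence whose windows are the words of that orbit, so an admissible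
permutation with a single orbit yields a de Bruijn cycle.

Rotation is admissible; take an admissible `σ` whose cycle through a fixed word is as large as
possible. If some word is missed, connectivity of the de Bruijn graph gives an edge `e → y` leaving
that cycle. The words `e` and `σ⁻¹ y` have the common successor `y`, hence the same successors
(the edge relation is difunctional), so `σ` composed with the transposition of `e` and `σ⁻¹ y` is
still admissible, and it merges the cycles of `e` and `σ⁻¹ y`, contradicting maximality.
-/

open Equiv Function Relation Finset

def Relation.Difunctional {α β : Type*} (R : α → β → Prop) : Prop :=
  ∀ ⦃x x' y y'⦄, R x y → R x' y → R x y' → R x' y'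

theorem Relation.ReflTransGen.exists_crossing {α : Type*} {R : α → α → Prop} {p : α → Prop}
    {a b : α} (hab : ReflTransGen R a b) (ha : p a) (hb : ¬ p b) :
    ∃ x y, R x y ∧ p x ∧ ¬ p y := by
  induction hab with
  | refl => exact absurd ha hb
  | @tail c _ _ hcd ih =>
    by_cases hc : p c
    · exact ⟨c, _, hcd, hc, hb⟩
    · exact ih hc

namespace Equiv.Perm

variable {α : Type*}

theorem SameCycle.sameCycle_mul_swap [Finite α] [DecidableEq α] {σ : Perm α} {x x' y : α}
    (hy : σ.SameCycle x y) (hx' : ¬ σ.SameCycle x x') : (σ * swap x x').SameCycle x' y := by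
  set τ := σ * swap x x'
  -- `τ` agrees with `σ` on the `σ`-cycle of `x` except at `x`, where that cycle closes anyway.
  have along : ∀ j : ℕ, τ.SameCycle (σ x) ((σ ^ (j + 1)) x) := by
    intro j
    induction j with
    | zero => rw [zero_add, pow_one]
    | succ j ih =>
      rw [pow_succ', mul_apply]
      set z := (σ ^ (j + 1)) x
      by_cases hzx : z = x
      · rw [hzx]
      · have hzx' : z ≠ x' := fun h => hx' (h ▸ ⟨(j + 1 : ℕ), by rw [zpow_natCast]⟩)
        have hτz : τ z = σ z := by simp [τ, swap_apply_of_ne_of_ne hzx hzx']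
        exact hτz ▸ sameCycle_apply_right.mpr ih
  obtain ⟨t, rfl⟩ := hy.exists_nat_pow_eq
  obtain ⟨s, hs⟩ : ∃ s, t + orderOf σ = s + 1 := ⟨t + orderOf σ - 1, by grind [orderOf_pos σ]⟩
  have hper : (σ ^ (s + 1)) x = (σ ^ t) x := by rw [← hs, pow_add, pow_orderOf_eq_one, mul_one]
  have hτx' : τ x' = σ x := by simp [τ]
  exact hper ▸ (sameCycle_apply_right.mpr (SameCycle.refl τ x')).trans (hτx' ▸ along s)

variable [Fintype α] {σ : Perm α} {a : α}

theorem minimalPeriod_eq_card_of_forall_sameCycle (h : ∀ y, σ.SameCycle a y) :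
    minimalPeriod σ a = Fintype.card α := by
  classical
  have horbit : ∀ y, y ∈ MulAction.orbit (Subgroup.zpowers σ) a := fun y => by
    obtain ⟨i, hi⟩ := h y
    exact ⟨⟨σ ^ i, Subgroup.zpow_mem_zpowers σ i⟩, hi⟩
  calc minimalPeriod σ a = Fintype.card (MulAction.orbit (Subgroup.zpowers σ) a) :=
        MulAction.minimalPeriod_eq_card σ a
    _ = Fintype.card α := Fintype.card_congr (Equiv.subtypeUnivEquiv horbit)

theorem pow_mod_card_apply_of_forall_sameCycle (h : ∀ y, σ.SameCycle a y) (t : ℕ) :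
    (σ ^ (t % Fintype.card α)) a = (σ ^ t) a := by
  rw [← minimalPeriod_eq_card_of_forall_sameCycle h, ← iterate_eq_pow, ← iterate_eq_pow,
    iterate_mod_minimalPeriod_eq]

variable {N : ℕ}

theorem pow_val_add_apply_of_forall_sameCycle (h : ∀ y, σ.SameCycle a y)
    (hN : Fintype.card α = N) (i : ZMod N) (j : ℕ) :
    (σ ^ (i + j).val) a = (σ ^ j) ((σ ^ i.val) a) := by
  subst hN
  have : Nonempty α := ⟨a⟩
  rw [ZMod.val_add, ZMod.val_natCast, Nat.add_mod_mod, pow_mod_card_apply_of_forall_sameCycle h,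
    ← mul_apply, ← pow_add, add_comm]

theorem bijective_pow_val_apply_of_forall_sameCycle (h : ∀ y, σ.SameCycle a y)
    (hN : Fintype.card α = N) : Bijective fun i : ZMod N => (σ ^ i.val) a := by
  subst hN
  have : Nonempty α := ⟨a⟩
  refine (Fintype.bijective_iff_surjective_and_card _).mpr ⟨fun y => ?_, ZMod.card _⟩
  obtain ⟨t, rfl⟩ := (h y).exists_nat_pow_eq
  exact ⟨t, by simp only [ZMod.val_natCast, pow_mod_card_apply_of_forall_sameCycle h]⟩

end Equiv.Perm

namespace Relation.Difunctional

variable {α : Type*} {R : α → α → Prop}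

theorem forall_mul_swap [DecidableEq α] (hR : Difunctional R) {σ : Perm α}
    (hσ : ∀ w, R w (σ w)) {x x' z : α} (hx : R x z) (hx' : R x' z) (w : α) :
    R w ((σ * swap x x') w) := by
  rcases eq_or_ne w x with rfl | hwx
  · simpa using hR hx' hx (hσ x')
  rcases eq_or_ne w x' with rfl | hwx'
  · simpa using hR hx hx' (hσ x)
  · simpa [swap_apply_of_ne_of_ne hwx hwx'] using hσ w

theorem exists_perm_forall_sameCycle [Fintype α] [DecidableEq α] (hR : Difunctional R) {a : α}
    (hconn : ∀ y, ReflTransGen R a y) {σ₀ : Perm α} (hσ₀ : ∀ x, R x (σ₀ x)) :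
    ∃ σ : Perm α, (∀ x, R x (σ x)) ∧ ∀ y, σ.SameCycle a y := by
  classical
  obtain ⟨σ, hσ, hmax⟩ := Finset.exists_max_image {σ : Perm α | ∀ x, R x (σ x)}
    (fun σ => #{y | σ.SameCycle a y}) ⟨σ₀, by simpa using hσ₀⟩
  rw [Finset.mem_filter_univ] at hσ
  refine ⟨σ, hσ, fun b => by_contra fun hb => ?_⟩
  obtain ⟨e, y, hey, he, hy⟩ := (hconn b).exists_crossing (Perm.SameCycle.refl σ a) hb
  set e' := σ.symm y
  have he' : ¬ σ.SameCycle a e' := fun h => hy (h.trans ⟨1, by simp [e']⟩)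
  set τ := σ * swap e e'
  have hτ : ∀ x, R x (τ x) := hR.forall_mul_swap hσ hey (by simpa [e'] using hσ e')
  have hmerge : ∀ y, σ.SameCycle e y → τ.SameCycle e' y :=
    fun y hy => hy.sameCycle_mul_swap fun h => he' (he.trans h)
  have ha : τ.SameCycle a e' := (hmerge a he.symm).symm
  have hlt : #{y | σ.SameCycle a y} < #{y | τ.SameCycle a y} := by
    refine Finset.card_lt_card ((Finset.ssubset_iff_of_subset ?_).mpr ⟨e', ?_, ?_⟩)
    · intro y
      simpa using fun hy => ha.trans (hmerge y (he.symm.trans hy))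
    · simpa using ha
    · simpa using he'
  exact (hmax τ (by simpa using hτ)).not_gt hlt

end Relation.Difunctional

def DeBruijnAdj {α : Type*} {m : ℕ} (e y : Fin (m + 1) → α) : Prop :=
  Fin.tail e = Fin.init y

section DeBruijn

variable {α : Type*} {m : ℕ}

theorem difunctional_deBruijnAdj : Difunctional (@DeBruijnAdj α m) :=
  fun _ _ _ _ h₁ h₂ h₃ => h₂.trans (h₁.symm.trans h₃)

theorem deBruijnAdj_comp_finRotate (e : Fin (m + 1) → α) :
    DeBruijnAdj e (e ∘ finRotate (m + 1)) := by
  funext i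
  simp only [Fin.tail, Fin.init, comp_apply]
  congr 1
  ext
  rw [coe_finRotate_of_ne_last (Fin.castSucc_ne_last i), Fin.val_castSucc, Fin.val_succ]

theorem reflTransGen_deBruijnAdj (e w : Fin (m + 1) → α) : ReflTransGen DeBruijnAdj e w := by
  suffices overlap : ∀ q (e : Fin (m + 1) → α),
      (∀ i (h : i + q < m + 1), w ⟨i, by omega⟩ = e ⟨i + q, h⟩) → ReflTransGen DeBruijnAdj e w from
    overlap (m + 1) e fun i h => by omega
  intro q
  induction q with
  | zero => exact fun e he => (funext fun i => he i i.isLt : w = e) ▸ ReflTransGen.refl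
  | succ q ih =>
    intro e he
    let y : Fin (m + 1) → α := Fin.snoc (Fin.tail e) (w ⟨m - q, by omega⟩)
    refine .head (Fin.init_snoc (α := fun _ => α) ..).symm (ih y fun i h => ?_)
    by_cases hi : i + q < m
    · exact (he i (by omega)).trans (Fin.snoc_castSucc (α := fun _ => α)
        (p := Fin.tail e) (x := w ⟨m - q, by omega⟩) (i := ⟨i + q, hi⟩)).symm
    · obtain rfl : i = m - q := by omega
      exact (Fin.snoc_last (α := fun _ => α) ..).symm.trans
        (congrArg y (Fin.ext (by simp only [Fin.val_last]; omega)))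

theorem pow_apply_zero_of_deBruijnAdj {σ : Perm (Fin (m + 1) → α)}
    (hσ : ∀ e, DeBruijnAdj e (σ e)) (e : Fin (m + 1) → α) (j : Fin (m + 1)) :
    (σ ^ (j : ℕ)) e 0 = e j := by
  obtain ⟨j, hj⟩ := j
  induction j generalizing e with
  | zero => rfl
  | succ j ih =>
    rw [pow_succ, Perm.mul_apply, ih (σ e) (by omega)]
    exact congrFun (hσ e).symm ⟨j, by omega⟩

theorem exists_perm_deBruijnAdj_forall_sameCycle [Fintype α] [DecidableEq α]
    (a : Fin (m + 1) → α) :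
    ∃ σ : Perm (Fin (m + 1) → α), (∀ e, DeBruijnAdj e (σ e)) ∧ ∀ y, σ.SameCycle a y :=
  difunctional_deBruijnAdj.exists_perm_forall_sameCycle (reflTransGen_deBruijnAdj a)
    (σ₀ := (finRotate (m + 1)).symm.arrowCongr (Equiv.refl α)) deBruijnAdj_comp_finRotate

end DeBruijn

/-- For all positive integers `n` and `k` there exists a de Bruijn cycle of all
`n`-letter words over a `k`-letter alphabet: a cyclic sequence `f` of length `k ^ n`
whose `n`-windows enumerate all words `Fin n → Fin k`, each exactly once. -/
theorem exists_deBruijn_cycle (n k : ℕ) (hn : 0 < n) (hk : 0 < k) :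
    ∃ f : ZMod (k ^ n) → Fin k,
      Function.Bijective
        (fun i : ZMod (k ^ n) => fun j : Fin n => f (i + ((j : ℕ) : ZMod (k ^ n)))) := by
  obtain ⟨m, rfl⟩ := Nat.exists_eq_add_one_of_ne_zero hn.ne'
  let a : Fin (m + 1) → Fin k := fun _ => ⟨0, hk⟩
  obtain ⟨σ, hσ, hcyc⟩ := exists_perm_deBruijnAdj_forall_sameCycle a
  have hcard : Fintype.card (Fin (m + 1) → Fin k) = k ^ (m + 1) := by simp
  refine ⟨fun i => (σ ^ i.val) a 0, ?_⟩
  convert Perm.bijective_pow_val_apply_of_forall_sameCycle hcyc hcard using 2 with i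
  funext j
  beta_reduce
  rw [Perm.pow_val_add_apply_of_forall_sameCycle hcyc hcard, pow_apply_zero_of_deBruijnAdj hσ]
end

section
/- Let k, n be positive integers and let s, t be integers with 0 ≤ s < s + k ≤ t ≤ n·k. Let W be the set of all words w : Fin n → Fin (k+1) whose weight h(w) = Σᵢ wᵢ satisfies s ≤ h(w) ≤ t, and let N = |W|. Then there exists a function f : ZMod N → Fin (k+1) such that the map sending each i ∈ ZMod N to the word (j : Fin n) ↦ f(i + j) is a bijection from ZMod N onto W. -/
/-!
A universal cycle of a set `W` of words of length `m + 1` is an Eulerian circuit of the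
multigraph whose vertices are the words of length `m` and whose edges are the words `w ∈ W`,
going from `Fin.init w` to `Fin.tail w`. We encode circuits as permutations `σ` of `W` sending
each edge to one that starts where it ends; a universal cycle is such a `σ` with a single cycle.
Rotating words gives one such permutation when `W` is closed under rotation, and among all of
them the one whose cycle through a fixed edge is longest has a single cycle if the multigraph is
connected: two edges with a common target on different cycles can exchange their successors,
which merges the two cycles. Two words differing in one letter are connected through their
rotations, and every word of weight in `[s, t]` is linked by one-letter changes to a fixed word
of weight `t`.
-/

def wt {n k : ℕ} (w : Fin n → Fin (k + 1)) : ℕ := ∑ i, (w i : ℕ)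

open Equiv Function

theorem Relation.reflTransGen_of_exists_lt {β : Type*} {r : β → β → Prop} (d : β → ℕ) {u : β}
    (h : ∀ w ≠ u, ∃ w', r w w' ∧ d w' < d w) (w : β) : Relation.ReflTransGen r w u := by
  by_cases hw : w = u
  · exact hw ▸ .refl
  · obtain ⟨w', hr, hlt⟩ := h w hw
    exact .head hr (reflTransGen_of_exists_lt d h w')
termination_by d w

namespace Equiv.Perm

variable {α : Type*} [Finite α]

theorem SameCycle.mem_of_mapsTo {σ : Perm α} {U : Set α} (hU : Set.MapsTo σ U U) {a b : α}
    (hab : σ.SameCycle a b) (ha : a ∈ U) : b ∈ U := by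
  obtain ⟨m, -, rfl⟩ := hab.exists_pow_eq'
  rw [coe_pow]
  exact hU.iterate m ha

theorem sameCycle_mul_swap_of_not_sameCycle [DecidableEq α] {σ : Perm α} {x y z : α}
    (hxy : ¬σ.SameCycle x y) (hz : σ.SameCycle x z ∨ σ.SameCycle y z) :
    (σ * swap x y).SameCycle x z := by
  set τ := σ * swap x y
  have hτx : τ x = σ y := by simp [τ]
  have hτy : τ y = σ x := by simp [τ]
  have hτ : ∀ w, w ≠ x → w ≠ y → τ w = σ w := fun w hwx hwy => by
    simp [τ, swap_apply_of_ne_of_ne hwx hwy]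
  -- From `x`, `τ` enters the σ-cycle of `y` at `σ y` and follows it until it reaches `y`.
  have hy : τ.SameCycle x y := by
    by_contra hny
    have hmaps : Set.MapsTo σ {w | σ.SameCycle y w ∧ τ.SameCycle x w}
        {w | σ.SameCycle y w ∧ τ.SameCycle x w} := by
      rintro w ⟨hyw, hxw⟩
      have hwx : w ≠ x := by rintro rfl; exact hxy hyw.symm
      have hwy : w ≠ y := by rintro rfl; exact hny hxw
      exact ⟨hyw.apply_right, hτ w hwx hwy ▸ hxw.apply_right⟩
    have hσy : σ.SameCycle (σ y) y := (SameCycle.refl σ y).apply_left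
    exact hny (hσy.mem_of_mapsTo hmaps ⟨(SameCycle.refl σ y).apply_right,
      hτx ▸ (SameCycle.refl τ x).apply_right⟩).2
  have hmaps : Set.MapsTo σ {w | τ.SameCycle x w} {w | τ.SameCycle x w} := by
    intro w hw
    by_cases hwx : w = x
    · subst hwx; exact hτy ▸ hy.apply_right
    by_cases hwy : w = y
    · subst hwy; exact hτx ▸ (SameCycle.refl τ x).apply_right
    exact hτ w hwx hwy ▸ hw.apply_right
  rcases hz with hz | hz
  · exact hz.mem_of_mapsTo hmaps (SameCycle.refl τ x)
  · exact hz.mem_of_mapsTo hmaps hy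

theorem exists_bijective_zmod_of_forall_sameCycle {σ : Perm α} {a : α}
    (h : ∀ z, σ.SameCycle a z) :
    ∃ g : ZMod (Nat.card α) → α, g.Bijective ∧ ∀ i, g (i + 1) = σ (g i) := by
  set p := minimalPeriod σ a
  have : NeZero p := MulAction.minimalPeriod_pos σ a
  let g : ZMod p → α := fun i => σ^[i.val] a
  have hg : ∀ m : ℕ, g m = σ^[m] a := fun m => by
    simp only [g, ZMod.val_natCast]
    exact iterate_mod_minimalPeriod_eq
  have hbij : g.Bijective := by
    refine ⟨fun i j hij => ZMod.val_injective p ?_, fun z => ?_⟩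
    · exact iterate_injOn_Iio_minimalPeriod (ZMod.val_lt i) (ZMod.val_lt j) hij
    · obtain ⟨m, -, rfl⟩ := (h z).exists_pow_eq'
      exact ⟨m, by rw [hg, coe_pow]⟩
  have hcard : p = Nat.card α := by
    rw [← Nat.card_eq_of_bijective g hbij, Nat.card_zmod]
  rw [← hcard]
  refine ⟨g, hbij, fun i => ?_⟩
  rw [← ZMod.natCast_zmod_val i, ← Nat.cast_succ, hg, hg, iterate_succ_apply']

end Equiv.Perm

open Equiv.Perm

section SuccessorPerm

variable {α V : Type*} (src tgt : α → V)

def IsSuccessorPerm (σ : Perm α) : Prop := ∀ e, src (σ e) = tgt e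

def SharesVertex (a b : α) : Prop := ∃ v, (src a = v ∨ tgt a = v) ∧ (src b = v ∨ tgt b = v)

variable {src tgt}

instance : Std.Symm (SharesVertex src tgt) where
  symm _ _ := fun ⟨v, ha, hb⟩ => ⟨v, hb, ha⟩

theorem IsSuccessorPerm.sharesVertex_apply {σ : Perm α} (hσ : IsSuccessorPerm src tgt σ)
    (a : α) : SharesVertex src tgt a (σ a) :=
  ⟨tgt a, Or.inr rfl, Or.inl (hσ a)⟩

theorem IsSuccessorPerm.mul_swap [DecidableEq α] {σ : Perm α} (hσ : IsSuccessorPerm src tgt σ)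
    {x y : α} (hxy : tgt x = tgt y) : IsSuccessorPerm src tgt (σ * swap x y) := by
  intro e
  rw [Perm.mul_apply, hσ, swap_apply_def]
  split_ifs with hx hy
  · rw [hx, hxy]
  · rw [hy, hxy]
  · rfl

theorem IsSuccessorPerm.exists_sameCycle_tgt_eq {σ : Perm α} (hσ : IsSuccessorPerm src tgt σ)
    {a : α} {v : V} (hv : src a = v ∨ tgt a = v) : ∃ x, σ.SameCycle a x ∧ tgt x = v := by
  rcases hv with hv | hv
  · refine ⟨σ.symm a, (SameCycle.refl σ a).symm_apply_right, ?_⟩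
    rw [← hσ, apply_symm_apply, hv]
  · exact ⟨a, .refl σ a, hv⟩

theorem exists_isSuccessorPerm_forall_sameCycle [Finite α] {σ₀ : Perm α}
    (h₀ : IsSuccessorPerm src tgt σ₀)
    (hconn : ∀ a b, Relation.ReflTransGen (SharesVertex src tgt) a b) (e₀ : α) :
    ∃ σ, IsSuccessorPerm src tgt σ ∧ ∀ z, σ.SameCycle e₀ z := by
  classical
  have : Nonempty {σ // IsSuccessorPerm src tgt σ} := ⟨⟨σ₀, h₀⟩⟩
  obtain ⟨⟨σ, hσ⟩, hmax⟩ :=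
    Finite.exists_max fun σ : {σ // IsSuccessorPerm src tgt σ} =>
      {z | σ.1.SameCycle e₀ z}.ncard
  refine ⟨σ, hσ, fun z => ?_⟩
  have hclosed : ∀ a b, σ.SameCycle e₀ a → SharesVertex src tgt a b → σ.SameCycle e₀ b := by
    rintro a b ha ⟨v, hav, hbv⟩
    by_contra hb
    obtain ⟨x, hax, hx⟩ := hσ.exists_sameCycle_tgt_eq hav
    obtain ⟨y, hby, hy⟩ := hσ.exists_sameCycle_tgt_eq hbv
    have hex : σ.SameCycle e₀ x := ha.trans hax
    have hxy : ¬σ.SameCycle x y := fun hxy => hb ((hex.trans hxy).trans hby.symm)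
    have hmerge : ∀ z, σ.SameCycle x z ∨ σ.SameCycle y z → (σ * swap x y).SameCycle e₀ z :=
      fun z hz => (sameCycle_mul_swap_of_not_sameCycle hxy (Or.inl hex.symm)).symm.trans
        (sameCycle_mul_swap_of_not_sameCycle hxy hz)
    have hlt : {z | σ.SameCycle e₀ z} ⊂ {z | (σ * swap x y).SameCycle e₀ z} :=
      (Set.ssubset_iff_of_subset fun z hz => hmerge z (Or.inl (hex.symm.trans hz))).2
        ⟨y, hmerge y (Or.inr (.refl σ y)), fun hy' => hb (SameCycle.trans hy' hby.symm)⟩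
    exact (Set.ncard_lt_ncard hlt).not_ge (hmax ⟨_, hσ.mul_swap (hx.trans hy.symm)⟩)
  induction hconn e₀ z with
  | refl => exact .refl σ e₀
  | tail _ hbc ih => exact hclosed _ _ ih hbc

end SuccessorPerm

section Words

variable {A : Type*} {m : ℕ}

def cyclicWindows {N : ℕ} (n : ℕ) (f : ZMod N → A) (i : ZMod N) : Fin n → A :=
  fun j => f (i + (j : ℕ))

def IsUCycle {n N : ℕ} (W : Set (Fin n → A)) (f : ZMod N → A) : Prop :=
  Injective (cyclicWindows n f) ∧ Set.range (cyclicWindows n f) = W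

def OneLetterApart {n : ℕ} {W : Set (Fin n → A)} (a b : W) : Prop :=
  ∃ i, ∀ j ≠ i, a.1 j = b.1 j

instance {n : ℕ} {W : Set (Fin n → A)} : Std.Symm (OneLetterApart (W := W)) where
  symm _ _ := fun ⟨i, h⟩ => ⟨i, fun j hj => (h j hj).symm⟩

theorem cyclicWindows_eq_of_init_eq_tail {N : ℕ} {g : ZMod N → Fin (m + 1) → A}
    (hg : ∀ i, Fin.init (g (i + 1)) = Fin.tail (g i)) : cyclicWindows (m + 1) (g · 0) = g := by
  funext i j
  induction j using Fin.induction generalizing i with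
  | zero => simp [cyclicWindows]
  | succ j ih =>
    have : i + ((j.succ : ℕ) : ZMod N) = i + 1 + (j.castSucc : ℕ) := by
      rw [Fin.val_succ, Fin.val_castSucc, Nat.cast_succ]; ring
    simp only [cyclicWindows] at ih ⊢
    rw [this, ih]
    exact congrFun (hg i) j

theorem init_comp_finRotate (w : Fin (m + 1) → A) :
    Fin.init (w ∘ finRotate (m + 1)) = Fin.tail w := by
  funext j
  simp [Fin.init, Fin.tail]

def rotatePerm {W : Set (Fin (m + 1) → A)} (hW : ∀ w, w ∘ finRotate (m + 1) ∈ W ↔ w ∈ W) :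
    Perm W :=
  Perm.subtypePerm ((finRotate (m + 1)).symm.arrowCongr (Equiv.refl A)) hW

variable {W : Set (Fin (m + 1) → A)}

theorem isSuccessorPerm_rotatePerm (hW : ∀ w, w ∘ finRotate (m + 1) ∈ W ↔ w ∈ W) :
    IsSuccessorPerm (fun w : W => Fin.init w.1) (fun w => Fin.tail w.1) (rotatePerm hW) :=
  fun w => init_comp_finRotate w.1

theorem reflTransGen_sharesVertex_of_forall_ne (hW : ∀ w, w ∘ finRotate (m + 1) ∈ W ↔ w ∈ W)
    (i : Fin (m + 1)) {a b : W} (hab : ∀ j ≠ i, a.1 j = b.1 j) :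
    Relation.ReflTransGen (SharesVertex (fun w : W => Fin.init w.1) (fun w => Fin.tail w.1))
      a b := by
  induction i using Fin.induction generalizing a b with
  | zero =>
    exact .single ⟨Fin.tail a.1, Or.inr rfl, Or.inr (funext fun j => (hab _ j.succ_ne_zero).symm)⟩
  | succ i ih =>
    -- Rotating both words moves the position where they differ one step to the left.
    have hrot : ∀ j ≠ i.castSucc, (rotatePerm hW a).1 j = (rotatePerm hW b).1 j := fun j hj =>
      hab _ (by
        rw [Equiv.symm_symm, ← Fin.coeSucc_eq_succ, ← finRotate_apply]
        exact (finRotate _).injective.ne hj)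
    have hsucc := isSuccessorPerm_rotatePerm hW
    exact .head (hsucc.sharesVertex_apply a) ((ih hrot).tail (symm (hsucc.sharesVertex_apply b)))

theorem exists_isUCycle_of_rotation_invariant [Finite W]
    (hW : ∀ w, w ∘ finRotate (m + 1) ∈ W ↔ w ∈ W) (hne : W.Nonempty)
    (hconn : ∀ a b : W, Relation.ReflTransGen OneLetterApart a b) :
    ∃ f : ZMod (Nat.card W) → A, IsUCycle W f := by
  obtain ⟨w₀, hw₀⟩ := hne
  have hconn' : ∀ a b : W, Relation.ReflTransGen
      (SharesVertex (fun w : W => Fin.init w.1) (fun w => Fin.tail w.1)) a b := fun a b =>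
    Relation.reflTransGen_closed
      (fun _ _ ⟨i, hi⟩ => reflTransGen_sharesVertex_of_forall_ne hW i hi) _ _ (hconn a b)
  obtain ⟨σ, hσ, hcyc⟩ :=
    exists_isSuccessorPerm_forall_sameCycle (isSuccessorPerm_rotatePerm hW) hconn' ⟨w₀, hw₀⟩
  obtain ⟨g, hg, hgσ⟩ := exists_bijective_zmod_of_forall_sameCycle hcyc
  have hwin : cyclicWindows (m + 1) (fun i => (g i).1 0) = Subtype.val ∘ g :=
    cyclicWindows_eq_of_init_eq_tail fun i => by simp only [hgσ]; exact hσ (g i)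
  refine ⟨fun i => (g i).1 0, ?_, ?_⟩
  · rw [hwin]
    exact Subtype.val_injective.comp hg.1
  · rw [hwin, Set.range_comp, hg.2.range_eq, Set.image_univ, Subtype.range_coe]

end Words

section Weight

variable {n k : ℕ}

theorem wt_comp_perm (w : Fin n → Fin (k + 1)) (e : Equiv.Perm (Fin n)) : wt (w ∘ e) = wt w :=
  Equiv.sum_comp e fun i => (w i : ℕ)

theorem wt_update_add (w : Fin n → Fin (k + 1)) (i : Fin n) (v : Fin (k + 1)) :
    wt (update w i v) + w i = wt w + v := by
  simp only [wt, apply_update (fun _ (x : Fin (k + 1)) => (x : ℕ))]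
  rw [Finset.sum_update_of_mem (Finset.mem_univ i), ← Finset.add_sum_erase _ _ (Finset.mem_univ i),
    Finset.sdiff_singleton_eq_erase]
  ring

theorem exists_lt_of_wt_lt {w u : Fin n → Fin (k + 1)} (h : wt w < wt u) :
    ∃ i, (w i : ℕ) < u i := by
  by_contra! hle
  exact (Finset.sum_le_sum fun i _ => hle i).not_gt h

theorem exists_wt_eq {m : ℕ} (h : m ≤ n * k) : ∃ w : Fin n → Fin (k + 1), wt w = m := by
  induction m with
  | zero => exact ⟨0, by simp [wt]⟩
  | succ m ih =>
    obtain ⟨w, hw⟩ := ih (by omega)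
    have hlt : wt w < wt fun _ : Fin n => Fin.last k := by simp [wt] at hw ⊢; omega
    obtain ⟨i, hi⟩ := exists_lt_of_wt_lt hlt
    have hv : (w i : ℕ) + 1 < k + 1 := by simpa using hi
    have hupd : _ + _ = _ + ((w i : ℕ) + 1) := wt_update_add w i ⟨_, hv⟩
    exact ⟨update w i ⟨_, hv⟩, by omega⟩

theorem exists_update_dist_lt {s t : ℕ} (hst : s + k ≤ t) {u w : Fin n → Fin (k + 1)}
    (hu : wt u = t) (hw : s ≤ wt w ∧ wt w ≤ t) (hne : w ≠ u) :
    ∃ i v, (s ≤ wt (update w i v) ∧ wt (update w i v) ≤ t) ∧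
      Nat.dist v (u i) < Nat.dist (w i) (u i) := by
  rcases hw.2.lt_or_eq with hlt | heq
  · obtain ⟨i, hi⟩ := exists_lt_of_wt_lt (hu ▸ hlt)
    have hupd : _ + _ = _ + ((w i : ℕ) + 1) := wt_update_add w i ⟨w i + 1, by omega⟩
    refine ⟨i, ⟨w i + 1, by omega⟩, ⟨by omega, by omega⟩, ?_⟩
    simp only [Nat.dist]
    omega
  · -- at weight `t`, lowering one letter to its value in `u` loses at most `k`
    obtain ⟨i, hi⟩ : ∃ i, (u i : ℕ) < w i := by
      by_contra! hle
      refine hne (funext fun i => Fin.ext ?_)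
      exact (Finset.sum_eq_sum_iff_of_le fun i _ => hle i).1 (heq.trans hu.symm) i
        (Finset.mem_univ i)
    have hupd := wt_update_add w i (u i)
    have hwi := (w i).is_le
    refine ⟨i, u i, ⟨by omega, by omega⟩, ?_⟩
    simp only [Nat.dist]
    omega

theorem reflTransGen_oneLetterApart_of_wt_mem {s t : ℕ} (hst : s + k ≤ t) (htn : t ≤ n * k)
    (a b : {w : Fin n → Fin (k + 1) | s ≤ wt w ∧ wt w ≤ t}) :
    Relation.ReflTransGen OneLetterApart a b := by
  obtain ⟨u, hu⟩ := exists_wt_eq htn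
  have hreach : ∀ a : {w : Fin n → Fin (k + 1) | s ≤ wt w ∧ wt w ≤ t},
      Relation.ReflTransGen OneLetterApart a ⟨u, by omega, hu.le⟩ :=
    Relation.reflTransGen_of_exists_lt (fun a => ∑ j, Nat.dist (a.1 j) (u j)) fun a ha => by
      obtain ⟨i, v, hmem, hlt⟩ := exists_update_dist_lt hst hu a.2 (fun h => ha (Subtype.ext h))
      refine ⟨⟨update a.1 i v, hmem⟩, ⟨i, fun j hj => (update_of_ne hj _ _).symm⟩,
        Finset.sum_lt_sum (fun j _ => ?_) ⟨i, Finset.mem_univ i, by simpa using hlt⟩⟩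
      rcases eq_or_ne j i with rfl | hj
      · simpa using hlt.le
      · simp [update_of_ne hj]
  exact (hreach a).trans (symm (hreach b))

end Weight

theorem exists_ucycle_words_weight_range_general (n k s t : ℕ) (hn : 0 < n)
    (hst : s + k ≤ t) (htn : t ≤ n * k)
    (N : ℕ) (hN : N = Set.ncard {w : Fin n → Fin (k + 1) | s ≤ wt w ∧ wt w ≤ t}) :
    ∃ f : ZMod N → Fin (k + 1),
      Function.Injective
        (fun i : ZMod N => fun j : Fin n => f (i + ((j : ℕ) : ZMod N))) ∧
      Set.range (fun i : ZMod N => fun j : Fin n => f (i + ((j : ℕ) : ZMod N))) =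
        {w : Fin n → Fin (k + 1) | s ≤ wt w ∧ wt w ≤ t} := by
  obtain ⟨m, rfl⟩ := Nat.exists_eq_add_one_of_ne_zero hn.ne'
  obtain ⟨u, hu⟩ := exists_wt_eq htn
  subst hN
  exact exists_isUCycle_of_rotation_invariant
    (fun w => by simp only [Set.mem_ofPred_eq, wt_comp_perm]) ⟨u, by omega, hu.le⟩
    (reflTransGen_oneLetterApart_of_wt_mem hst htn)

/-- For positive integers `k`, `n` and integers `s, t` with `0 ≤ s < s + k ≤ t ≤ n * k`,
there is a universal cycle of the set `W` of all `n`-letter words over the alphabet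
`{0, 1, …, k}` of weight between `s` and `t`: a cyclic sequence of length `N = |W|`
whose `n`-windows enumerate `W` without repetition. -/
theorem exists_ucycle_words_weight_range (n k s t : ℕ) (hn : 0 < n) (hk : 0 < k)
    (hst : s + k ≤ t) (htn : t ≤ n * k)
    (N : ℕ) (hN : N = Set.ncard {w : Fin n → Fin (k + 1) | s ≤ wt w ∧ wt w ≤ t}) :
    ∃ f : ZMod N → Fin (k + 1),
      Function.Injective
        (fun i : ZMod N => fun j : Fin n => f (i + ((j : ℕ) : ZMod N))) ∧
      Set.range (fun i : ZMod N => fun j : Fin n => f (i + ((j : ℕ) : ZMod N))) =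
        {w : Fin n → Fin (k + 1) | s ≤ wt w ∧ wt w ≤ t} :=
  exists_ucycle_words_weight_range_general n k s t hn hst htn N hN
end

section
/- The map sending a permutation π of Fin n to its permutation graph (the simple graph on Fin n in which i and j with i < j are adjacent iff π(i) > π(j)) is injective: two permutations with the same permutation graph are equal. -/
/-- The permutation graph of `π`: vertices `i < j` are adjacent iff `π i > π j`,
i.e. iff `{i, j}` is an inversion of `π`. -/
def permGraph {n : ℕ} (π : Equiv.Perm (Fin n)) : SimpleGraph (Fin n) where
  Adj i j := (i < j ∧ π j < π i) ∨ (j < i ∧ π i < π j)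
  symm := ⟨fun i j h => h.symm⟩
  loopless := ⟨fun i h => by
    rcases h with ⟨h, _⟩ | ⟨h, _⟩ <;> exact lt_irrefl i h⟩

/-- `g ∘ f.symm` is a strictly monotone bijection of a well-order, hence the identity. -/
theorem Equiv.eq_of_lt_iff_lt {α β : Type*} [LinearOrder β] [WellFoundedLT β] {f g : α ≃ β}
    (h : ∀ i j, f i < f j ↔ g i < g j) : f = g := by
  have hmono : StrictMono (g ∘ f.symm) := fun a b hab => by
    simpa [← h] using hab
  have hid := Subsingleton.elim
    (hmono.orderIsoOfSurjective _ (g.surjective.comp f.symm.surjective)) (OrderIso.refl β)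
  ext x
  simpa using congr($hid (f x)).symm

namespace permGraph

variable {n : ℕ} {π σ : Equiv.Perm (Fin n)} {i j : Fin n}

theorem adj_iff_of_lt (hij : i < j) : (permGraph π).Adj i j ↔ π j < π i := by
  simp [permGraph, hij, hij.not_gt]

theorem not_adj_iff_of_lt (hij : i < j) : ¬(permGraph π).Adj i j ↔ π i < π j := by
  rw [adj_iff_of_lt hij, not_lt, le_iff_lt_or_eq, or_iff_left (π.injective.ne hij.ne)]

theorem lt_iff_lt_of_eq (h : permGraph π = permGraph σ) (i j : Fin n) :
    π i < π j ↔ σ i < σ j := by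
  rcases lt_trichotomy i j with hij | rfl | hji
  · rw [← not_adj_iff_of_lt hij, ← not_adj_iff_of_lt hij, h]
  · simp
  · rw [← adj_iff_of_lt hji, ← adj_iff_of_lt hji, h]

end permGraph

/-- The map sending a permutation of `Fin n` to its permutation graph is injective:
two permutations with the same permutation graph are equal. -/
theorem permGraph_injective (n : ℕ) :
    Function.Injective (fun π : Equiv.Perm (Fin n) => permGraph π) :=
  fun _ _ h => Equiv.eq_of_lt_iff_lt (permGraph.lt_iff_lt_of_eq h)
end

section
/- If a universal cycle of the k-subsets of [n] exists in the element representation — i.e., if there is a function f : ZMod C(n,k) → Fin n such that the map sending each i ∈ ZMod C(n,k) to the set {f(i), f(i+1), …, f(i+k−1)} is a bijection from ZMod C(n,k) onto the k-element subsets of Fin n — then n divides C(n,k). -/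
/-- If a universal cycle of the `k`-subsets of `[n]` exists in the element
representation — a cyclic sequence `f` over `Fin n` of length `n choose k` whose
`k`-windows `{f i, f (i+1), …, f (i+k-1)}`, taken as sets, are exactly the `k`-element
subsets of `Fin n`, each appearing once — then `n` divides `n choose k`. -/
theorem ucycle_element_representation_necessary (n k : ℕ) (hk : 1 ≤ k)
    (f : ZMod (n.choose k) → Fin n)
    (hinj : Function.Injective
      (fun i : ZMod (n.choose k) =>
        (Finset.range k).image fun j => f (i + ((j : ℕ) : ZMod (n.choose k)))))
    (hrange : Set.range
      (fun i : ZMod (n.choose k) =>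
        (Finset.range k).image fun j => f (i + ((j : ℕ) : ZMod (n.choose k)))) =
      {S : Finset (Fin n) | S.card = k}) :
    n ∣ n.choose k := by
  rcases Nat.eq_zero_or_pos n with hn | hn
  · subst hn; simp [Nat.choose_eq_zero_of_lt hk]
  rcases le_or_gt k n with hkn | hkn
  swap
  · simp [Nat.choose_eq_zero_of_lt hkn]
  have hN : 0 < n.choose k := Nat.choose_pos hkn
  haveI : NeZero (n.choose k) := ⟨hN.ne'⟩
  set W : ZMod (n.choose k) → Finset (Fin n) :=
    fun i => (Finset.range k).image fun j => f (i + ((j : ℕ) : ZMod (n.choose k))) with hWdef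
  have hinjW : Function.Injective W := hinj
  have hrangeW : Set.range W = {S : Finset (Fin n) | S.card = k} := hrange
  have hWcard : ∀ i, (W i).card = k := by
    intro i
    have : W i ∈ {S : Finset (Fin n) | S.card = k} := hrangeW ▸ Set.mem_range_self i
    exact this
  have hoffInj : ∀ i : ZMod (n.choose k),
      Set.InjOn (fun j : ℕ => f (i + ((j : ℕ) : ZMod (n.choose k)))) (Finset.range k) := by
    intro i
    apply Finset.card_image_iff.mp
    rw [Finset.card_range]
    exact hWcard i
  -- fibers of f
  set F : Fin n → Finset (ZMod (n.choose k)) :=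
    fun x => Finset.univ.filter (fun i => f i = x) with hFdef
  -- windows containing x
  set T : Fin n → Finset (ZMod (n.choose k)) :=
    fun x => Finset.univ.filter (fun i => x ∈ W i) with hTdef
  -- subsets of card k containing x
  set s : Fin n → Finset (Finset (Fin n)) :=
    fun x => Finset.univ.filter (fun S => S.card = k ∧ x ∈ S) with hsdef
  -- T x has the same card as s x, via W
  have hTs : ∀ x, (T x).card = (s x).card := by
    intro x
    apply Finset.card_bij (fun i _ => W i)
    · intro i hi
      simp only [hsdef, Finset.mem_filter, Finset.mem_univ, true_and]
      refine ⟨hWcard i, ?_⟩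
      simpa [hTdef] using hi
    · intro a _ b _ h
      exact hinjW h
    · intro S hS
      simp only [hsdef, Finset.mem_filter, Finset.mem_univ, true_and] at hS
      obtain ⟨i, hi⟩ : S ∈ Set.range W := hrangeW ▸ hS.1
      exact ⟨i, by simp [hTdef, hi, hS.2], hi⟩
  -- T x has card k * (F x).card
  have hTF : ∀ x, (T x).card = (F x).card * k := by
    intro x
    have hprod : ((F x) ×ˢ Finset.range k).card = (F x).card * k := by
      simp
    rw [← hprod]
    apply (Finset.card_bij (fun p _ => p.1 - ((p.2 : ℕ) : ZMod (n.choose k))) ?_ ?_ ?_).symm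
    · rintro ⟨p, j⟩ hp
      simp only [Finset.mem_product, hFdef, Finset.mem_filter, Finset.mem_univ, true_and] at hp
      simp only [hTdef, Finset.mem_filter, Finset.mem_univ, true_and, hWdef,
        Finset.mem_image]
      exact ⟨j, hp.2, by rw [sub_add_cancel, hp.1]⟩
    · rintro ⟨p, j⟩ hpj ⟨q, l⟩ hql h
      simp only [Finset.mem_product, hFdef, Finset.mem_filter, Finset.mem_univ, true_and] at hpj hql
      dsimp only at h
      have hij : f ((p - ((j : ℕ) : ZMod (n.choose k))) + ((j : ℕ) : ZMod (n.choose k))) = x := by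
        rw [sub_add_cancel]; exact hpj.1
      have hil : f ((p - ((j : ℕ) : ZMod (n.choose k))) + ((l : ℕ) : ZMod (n.choose k))) = x := by
        rw [h, sub_add_cancel]; exact hql.1
      have hjl : j = l := hoffInj _ (by simpa using hpj.2) (by simpa using hql.2)
        (hij.trans hil.symm)
      subst hjl
      have hpq : p = q := by
        have h2 := congrArg (· + ((j : ℕ) : ZMod (n.choose k))) h
        simpa [sub_add_cancel] using h2
      simp [hpq]
    · intro i hi
      simp only [hTdef, Finset.mem_filter, Finset.mem_univ, true_and, hWdef,
        Finset.mem_image] at hi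
      obtain ⟨j, hj, hfj⟩ := hi
      refine ⟨(i + ((j : ℕ) : ZMod (n.choose k)), j), ?_, by simp⟩
      simp [hFdef, hfj, hj]
  -- s x has constant card
  have hss : ∀ x y : Fin n, (s x).card = (s y).card := by
    intro x y
    apply Finset.card_bij (fun S _ => S.image (Equiv.swap x y))
    · intro S hS
      simp only [hsdef, Finset.mem_filter, Finset.mem_univ, true_and] at hS ⊢
      constructor
      · rw [Finset.card_image_of_injective _ (Equiv.injective _)]; exact hS.1
      · have : (Equiv.swap x y) x ∈ S.image (Equiv.swap x y) :=
          Finset.mem_image_of_mem _ hS.2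
        simpa using this
    · intro a _ b _ h
      exact Finset.image_injective (Equiv.injective _) h
    · intro S hS
      simp only [hsdef, Finset.mem_filter, Finset.mem_univ, true_and] at hS
      refine ⟨S.image (Equiv.swap x y), ?_, ?_⟩
      · simp only [hsdef, Finset.mem_filter, Finset.mem_univ, true_and]
        constructor
        · rw [Finset.card_image_of_injective _ (Equiv.injective _)]; exact hS.1
        · have : (Equiv.swap x y) y ∈ S.image (Equiv.swap x y) :=
            Finset.mem_image_of_mem _ hS.2
          simpa using this
      · rw [Finset.image_image]
        ext z
        simp [Equiv.swap_apply_self]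
  -- fibers have constant card
  have hFF : ∀ x y : Fin n, (F x).card = (F y).card := by
    intro x y
    have h1 : (F x).card * k = (F y).card * k := by
      rw [← hTF, ← hTF, hTs, hTs, hss x y]
    exact Nat.eq_of_mul_eq_mul_right hk h1
  -- sum of fiber cards is N
  obtain ⟨x0⟩ : Nonempty (Fin n) := ⟨⟨0, hn⟩⟩
  have hsum : Fintype.card (ZMod (n.choose k)) = ∑ x : Fin n, (F x).card := by
    apply Finset.card_eq_sum_card_fiberwise
    intro i _
    exact Finset.mem_univ (f i)
  rw [ZMod.card] at hsum
  have hsum2 : ∑ x : Fin n, (F x).card = n * (F x0).card := by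
    rw [Finset.sum_congr rfl (fun x _ => hFF x x0)]
    simp [Finset.card_univ, mul_comm]
  exact ⟨(F x0).card, hsum.trans hsum2⟩
end

section
/- For all integers n, k with 2 ≤ k ≤ n−2, there is no universal cycle of the k-subsets of [n] in the binary string coding: there is no function f : ZMod C(n,k) → Bool such that the map sending each i ∈ ZMod C(n,k) to the word (j : Fin n) ↦ f(i + j) is a bijection from ZMod C(n,k) onto the set of words w : Fin n → Bool with exactly k coordinates equal to true. -/
lemma le_choose_aux : ∀ m j : ℕ, 1 ≤ j → j < m → m ≤ m.choose j := by
  intro m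
  induction m with
  | zero => intro j h1 h2; omega
  | succ m ih =>
    intro j h1 h2
    rcases Nat.eq_or_lt_of_le h1 with h | h
    · simp [← h]
    · obtain ⟨t, rfl⟩ : ∃ t, j = t + 1 := ⟨j - 1, by omega⟩
      rw [Nat.choose_succ_succ]; simp only [Nat.succ_eq_add_one]
      have h1 : m ≤ m.choose t := ih t (by omega) (by omega)
      have h2 : 1 ≤ m.choose (t+1) := Nat.choose_pos (by omega)
      omega

lemma lt_choose (n k : ℕ) (hk : 2 ≤ k) (hkn : k ≤ n - 2) : n < n.choose k := by
  have hn4 : 4 ≤ n := by omega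
  obtain ⟨m, rfl⟩ : ∃ m, n = m + 1 := ⟨n - 1, by omega⟩
  obtain ⟨t, rfl⟩ : ∃ t, k = t + 1 := ⟨k - 1, by omega⟩
  rw [Nat.choose_succ_succ]; simp only [Nat.succ_eq_add_one]
  have h1 : m ≤ m.choose t := le_choose_aux m t (by omega) (by omega)
  have h2 : m ≤ m.choose (t+1) := le_choose_aux m (t+1) (by omega) (by omega)
  omega

/-- The number of coordinates of a binary word that are `true`. -/
def weight {n : ℕ} (w : Fin n → Bool) : ℕ :=
  (Finset.univ.filter fun i => w i = true).card

/-- For `2 ≤ k ≤ n - 2`, there is no universal cycle of the `k`-subsets of `[n]` in the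
binary string coding: no cyclic binary sequence of length `n choose k` has `n`-windows
enumerating, without repetition, exactly the binary words of length `n` with exactly
`k` ones. -/
theorem no_ucycle_ksubsets_binary_coding (n k : ℕ) (hk : 2 ≤ k) (hkn : k ≤ n - 2) :
    ¬ ∃ f : ZMod (n.choose k) → Bool,
        Function.Injective
          (fun i : ZMod (n.choose k) => fun j : Fin n =>
            f (i + ((j : ℕ) : ZMod (n.choose k)))) ∧
        Set.range
          (fun i : ZMod (n.choose k) => fun j : Fin n =>
            f (i + ((j : ℕ) : ZMod (n.choose k)))) =
          {w : Fin n → Bool | weight w = k} := by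
  set N := n.choose k with hNdef
  rintro ⟨f, hinj, hrange⟩
  have hn4 : 4 ≤ n := by omega
  have hnN : n < N := lt_choose n k hk hkn
  haveI : NeZero N := ⟨by omega⟩
  -- every window has weight k, as a sum over range n
  have hw : ∀ i : ZMod N,
      (∑ j ∈ Finset.range n, (if f (i + (j : ZMod N)) = true then 1 else 0)) = k := by
    intro i
    have hmem : (fun j : Fin n => f (i + ((j : ℕ) : ZMod N))) ∈
        {w : Fin n → Bool | weight w = k} := by
      rw [← hrange]; exact ⟨i, rfl⟩
    have hwt : weight (fun j : Fin n => f (i + ((j : ℕ) : ZMod N))) = k := hmem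
    rw [weight, Finset.card_filter] at hwt
    rw [← hwt, Fin.sum_univ_eq_sum_range (fun j : ℕ => if f (i + (j : ZMod N)) = true then 1 else 0) n]
  -- f is invariant under adding n
  have hper : ∀ i : ZMod N, f (i + (n : ZMod N)) = f i := by
    intro i
    have h1 := hw i
    have h2 := hw (i + 1)
    have e1 : ∑ j ∈ Finset.range (n + 1), (if f (i + (j : ZMod N)) = true then 1 else 0)
        = (∑ j ∈ Finset.range n, (if f (i + (j : ZMod N)) = true then 1 else 0))
          + (if f (i + (n : ZMod N)) = true then 1 else 0) :=
      Finset.sum_range_succ _ n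
    have e2 : ∑ j ∈ Finset.range (n + 1), (if f (i + (j : ZMod N)) = true then 1 else 0)
        = (∑ j ∈ Finset.range n, (if f (i + ((j + 1 : ℕ) : ZMod N)) = true then 1 else 0))
          + (if f (i + ((0 : ℕ) : ZMod N)) = true then 1 else 0) :=
      Finset.sum_range_succ' _ n
    have e3 : ∀ j : ℕ, i + ((j + 1 : ℕ) : ZMod N) = (i + 1) + (j : ZMod N) := by
      intro j; push_cast; ring
    simp only [e3] at e2
    rw [h2] at e2
    rw [h1] at e1
    have e4 : i + ((0 : ℕ) : ZMod N) = i := by push_cast; ring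
    rw [e4] at e2
    rw [e1] at e2
    by_cases hfi : f i = true <;> by_cases hfn : f (i + (n : ZMod N)) = true <;>
      simp [hfi, hfn] at e2 ⊢ <;> simp_all
  -- the set of periods is an additive subgroup
  let H : AddSubgroup (ZMod N) :=
    { carrier := {c | ∀ i, f (i + c) = f i}
      zero_mem' := by intro i; simp
      add_mem' := by
        intro a b ha hb i
        rw [← add_assoc, hb, ha]
      neg_mem' := by
        intro a ha i
        have := ha (i + -a)
        simp only [neg_add_cancel_right] at this
        exact this.symm }
  have hnH : (n : ZMod N) ∈ H := hper
  set d := Nat.gcd n N with hd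
  have hdH : (d : ZMod N) ∈ H := by
    have hb := Nat.gcd_eq_gcd_ab n N
    have : ((d : ℤ) : ZMod N) = ((n * Nat.gcdA n N + N * Nat.gcdB n N : ℤ) : ZMod N) := by
      rw [← hb]
    have hcast : (d : ZMod N) = (Nat.gcdA n N) • (n : ZMod N) := by
      push_cast at this
      rw [ZMod.natCast_self] at this
      rw [zsmul_eq_mul]
      rw [this]; ring
    rw [hcast]
    exact zsmul_mem hnH _
  -- windows at d and 0 agree
  have hwin : (fun j : Fin n => f ((d : ZMod N) + ((j : ℕ) : ZMod N)))
      = (fun j : Fin n => f ((0 : ZMod N) + ((j : ℕ) : ZMod N))) := by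
    funext j
    have := hdH ((0 : ZMod N) + ((j : ℕ) : ZMod N))
    rw [← this]; ring_nf
  have hd0 : (d : ZMod N) = 0 := hinj hwin
  have hdvd : N ∣ d := (ZMod.natCast_eq_zero_iff d N).mp hd0
  have hdpos : 0 < d := Nat.gcd_pos_of_pos_left N (by omega)
  have hdle : d ≤ n := Nat.gcd_le_left N (by omega)
  have := Nat.le_of_dvd hdpos hdvd
  omega
end
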